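/- arXiv:2311.15388 — 3 statements merged into one kernel-verified Lean document; each statement's English description precedes it below -/
import Mathlib

section
/- The bivariate formal power series A(x,y) = Σ_{n,m ≥ 0} a(n,m) xⁿ yᵐ over ℤ satisfies (1 - x - x² + x³ - x³y²) · A(x,y) = 1 - x - x² + x³ + xy - x³y. -/
/-- `l` is a composition of `n`: a finite list of positive integers summing to `n`
(the empty list is the unique composition of `0`). -/
def IsComposition (n : ℕ) (l : List ℕ) : Prop :=
  (∀ x ∈ l, 0 < x) ∧ l.sum = n

/-- The Arndt condition: `σ_{2i-1} > σ_{2i}` (1-based) for every `i` with `2i ≤ ℓ`;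
with 0-based indices, `l[2i] > l[2i+1]` whenever `2i+1 < l.length`. -/
def IsArndt (l : List ℕ) : Prop :=
  ∀ i : ℕ, 2 * i + 1 < l.length → l.getD (2 * i + 1) 0 < l.getD (2 * i) 0

/-- `arndt n` is the number of Arndt compositions of `n`. -/
noncomputable def arndt (n : ℕ) : ℕ :=
  Set.ncard {l : List ℕ | IsComposition n l ∧ IsArndt l}

/-- `arndtParts n m` is the number of Arndt compositions of `n` with exactly `m` parts. -/
noncomputable def arndtParts (n m : ℕ) : ℕ :=
  Set.ncard {l : List ℕ | IsComposition n l ∧ IsArndt l ∧ l.length = m}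

/-- The generalized binomial coefficient `C(a,b) = a(a-1)⋯(a-b+1)/b!` for an integer `a`
and a natural number `b` (represented as a nonnegative integer); it is `0` for negative `b`. -/
def genChoose (a b : ℤ) : ℤ :=
  if 0 ≤ b then (∏ i ∈ Finset.range b.toNat, (a - (i : ℤ))) / (b.toNat.factorial : ℤ) else 0

/-- The bivariate generating function `A(x,y) = Σ_{n,m≥0} a(n,m) xⁿ yᵐ`,
with `x = X 0` and `y = X 1`. -/
noncomputable def arndtGF : MvPowerSeries (Fin 2) ℤ :=
  fun d => (arndtParts (d 0) (d 1) : ℤ)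


/-!
An Arndt composition with `m + 2` parts is a head pair `a > b ≥ 1` followed by an Arndt
composition with `m` parts, and the head pairs have generating function
`x³y² / ((1 - x)(1 - x²))`, where `(1 - x)(1 - x²) = 1 - x - x² + x³`. Coefficientwise: writing
`a = b + (n - k)`, the count `a(n, m + 2)` is `∑_{k < n} T k` with `T k = ∑_{b ≥ 1} a(k - 2b, m)`,
and `T (k + 2) = T k + a(k, m)`; hence
`a(n+3, m+2) - a(n+2, m+2) - a(n+1, m+2) + a(n, m+2) = a(n, m)`. Together with
`a(n, 0) = [n = 0]` and `a(n, 1) = [n ≥ 1]` these are the coefficients of the identity.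
-/

open Finset

theorem finite_setOf_isComposition (n : ℕ) (P : List ℕ → Prop) :
    {l : List ℕ | IsComposition n l ∧ P l}.Finite :=
  (Set.finite_range (Composition.blocks (n := n))).subset
    fun l ⟨⟨hpos, hsum⟩, _⟩ => ⟨⟨l, hpos _, hsum⟩, rfl⟩

noncomputable def arndtCompositions (n m : ℕ) : Finset (List ℕ) :=
  (finite_setOf_isComposition n fun l => IsArndt l ∧ l.length = m).toFinset

theorem mem_arndtCompositions {n m : ℕ} {l : List ℕ} :
    l ∈ arndtCompositions n m ↔ IsComposition n l ∧ IsArndt l ∧ l.length = m := by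
  simp [arndtCompositions]

theorem arndtParts_eq_card (n m : ℕ) : arndtParts n m = #(arndtCompositions n m) := by
  rw [arndtParts, arndtCompositions,
    ← Set.ncard_eq_toFinset_card _ (finite_setOf_isComposition _ _)]

theorem isArndt_cons_cons {a b : ℕ} {l : List ℕ} :
    IsArndt (a :: b :: l) ↔ b < a ∧ IsArndt l := by
  refine ⟨fun h => ⟨h 0 (by simp), fun i hi => ?_⟩, fun ⟨hab, h⟩ i hi => ?_⟩
  · simpa [Nat.mul_add] using h (i + 1) (by simp; omega)
  · rcases i with _ | i
    · simpa using hab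
    · simpa [Nat.mul_add] using h i (by simp at hi; omega)

theorem arndtCompositions_zero (n : ℕ) :
    arndtCompositions n 0 = if n = 0 then {[]} else ∅ := by
  ext l
  rw [mem_arndtCompositions, List.length_eq_zero_iff]
  constructor
  · rintro ⟨⟨-, rfl⟩, -, rfl⟩
    simp
  · split_ifs with hn
    · rintro h
      obtain rfl := mem_singleton.mp h
      exact ⟨⟨by simp, hn ▸ rfl⟩, fun i hi => by simp at hi, rfl⟩
    · simp

theorem arndtCompositions_one (n : ℕ) :
    arndtCompositions n 1 = if n = 0 then ∅ else {[n]} := by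
  ext l
  rw [mem_arndtCompositions, List.length_eq_one_iff]
  constructor
  · rintro ⟨⟨hpos, rfl⟩, -, a, rfl⟩
    simp [(hpos a (List.mem_singleton_self a)).ne']
  · split_ifs with hn
    · simp
    · rintro h
      obtain rfl := mem_singleton.mp h
      exact ⟨⟨by simpa [Nat.pos_iff_ne_zero], by simp⟩, fun i hi => by simp at hi, _, rfl⟩

/-- `twinHeadCount k m` counts the compositions `b :: b :: l` of `k` in which `l` is an Arndt
composition with `m` parts. -/
noncomputable def twinHeadCount (k m : ℕ) : ℕ :=
  ∑ j ∈ range (k / 2), arndtParts (k - 2 * (j + 1)) m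

/-- For `p = ⟨k, j⟩`, prepends the pair `(b + (n - k), b)` with `b = j + 1`: the first part exceeds
the second by `n - k`, so `k` is what is left of `n` once that excess is removed. -/
def consHeadPair (n : ℕ) (p : Σ _ : ℕ, ℕ) : List ℕ ↪ List ℕ :=
  ⟨fun l => (n - p.1 + p.2 + 1) :: (p.2 + 1) :: l, fun _ _ h => by simpa using h⟩

theorem consHeadPair_apply (n : ℕ) (p : Σ _ : ℕ, ℕ) (l : List ℕ) :
    consHeadPair n p l = (n - p.1 + p.2 + 1) :: (p.2 + 1) :: l :=
  rfl

theorem arndtCompositions_add_two (n m : ℕ) :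
    arndtCompositions n (m + 2) = ((range n).sigma fun k => range (k / 2)).biUnion
      fun p => (arndtCompositions (p.1 - 2 * (p.2 + 1)) m).map (consHeadPair n p) := by
  ext l
  simp only [mem_biUnion, mem_map, mem_sigma, mem_range, mem_arndtCompositions, consHeadPair_apply,
    Sigma.exists]
  constructor
  · rintro ⟨⟨hpos, hsum⟩, harndt, hlen⟩
    obtain ⟨a, b, t, rfl⟩ : ∃ a b t, l = a :: b :: t := by
      rcases l with _ | ⟨a, _ | ⟨b, t⟩⟩ <;> simp at hlen ⊢
    obtain ⟨hab, ht⟩ := isArndt_cons_cons.mp harndt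
    have hb : 0 < b := hpos b (by simp)
    simp only [List.sum_cons] at hsum
    refine ⟨n - (a - b), b - 1, ⟨by omega, by omega⟩, t,
      ⟨⟨fun x hx => hpos x (by simp [hx]), by omega⟩, ht, by simpa using hlen⟩, ?_⟩
    simp only [List.cons.injEq, and_true]
    constructor <;> omega
  · rintro ⟨k, j, ⟨hk, hj⟩, t, ⟨⟨hpos, hsum⟩, harndt, hlen⟩, rfl⟩
    refine ⟨⟨?_, by simp; omega⟩, isArndt_cons_cons.mpr ⟨by omega, harndt⟩, by simp [hlen]⟩
    simp only [List.mem_cons]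
    rintro x (rfl | rfl | hx)
    · omega
    · omega
    · exact hpos x hx

theorem arndtParts_add_two (n m : ℕ) :
    arndtParts n (m + 2) = ∑ k ∈ range n, twinHeadCount k m := by
  have hdisj : ((range n).sigma fun k => range (k / 2) : Set (Σ _ : ℕ, ℕ)).PairwiseDisjoint
      fun p => (arndtCompositions (p.1 - 2 * (p.2 + 1)) m).map (consHeadPair n p) := by
    rintro ⟨k₁, j₁⟩ h₁ ⟨k₂, j₂⟩ h₂ hne
    simp only [coe_sigma, Set.mem_sigma_iff, coe_range, Set.mem_Iio] at h₁ h₂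
    refine disjoint_left.mpr fun l hl₁ hl₂ => hne ?_
    obtain ⟨t₁, -, rfl⟩ := mem_map.mp hl₁
    obtain ⟨t₂, -, heq⟩ := mem_map.mp hl₂
    simp only [consHeadPair_apply, List.cons.injEq] at heq
    obtain ⟨h₁, h₂, -⟩ := heq
    congr 1 <;> omega
  rw [arndtParts_eq_card, arndtCompositions_add_two, card_biUnion hdisj, sum_sigma]
  simp only [card_map, ← arndtParts_eq_card, twinHeadCount]

theorem twinHeadCount_add_two (k m : ℕ) :
    twinHeadCount (k + 2) m = twinHeadCount k m + arndtParts k m := by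
  rw [twinHeadCount, show (k + 2) / 2 = k / 2 + 1 by omega, sum_range_succ', twinHeadCount,
    add_tsub_cancel_right]
  congr 1
  refine sum_congr rfl fun j _ => ?_
  congr 1
  omega

theorem arndtParts_add_three_add_two (n m : ℕ) :
    arndtParts (n + 3) (m + 2) + arndtParts n (m + 2) =
      arndtParts (n + 2) (m + 2) + arndtParts (n + 1) (m + 2) + arndtParts n m := by
  simp only [arndtParts_add_two, sum_range_succ, twinHeadCount_add_two]
  ring

theorem arndtParts_add_two_of_lt_three {n : ℕ} (hn : n < 3) (m : ℕ) :
    arndtParts n (m + 2) = 0 := by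
  interval_cases n <;> simp [arndtParts_add_two, sum_range_succ, twinHeadCount]

theorem arndtParts_zero (n : ℕ) : arndtParts n 0 = if n = 0 then 1 else 0 := by
  rw [arndtParts_eq_card, arndtCompositions_zero]
  split_ifs <;> rfl

theorem arndtParts_one (n : ℕ) : arndtParts n 1 = if n = 0 then 0 else 1 := by
  rw [arndtParts_eq_card, arndtCompositions_one]
  split_ifs <;> rfl

theorem arndtParts_sub_shifts (n m : ℕ) :
    (arndtParts n m : ℤ) - (if 1 ≤ n then (arndtParts (n - 1) m : ℤ) else 0)
        - (if 2 ≤ n then (arndtParts (n - 2) m : ℤ) else 0)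
        + (if 3 ≤ n then (arndtParts (n - 3) m : ℤ) else 0)
        - (if 3 ≤ n ∧ 2 ≤ m then (arndtParts (n - 3) (m - 2) : ℤ) else 0)
      = (if n = 0 ∧ m = 0 then 1 else 0) - (if n = 1 ∧ m = 0 then 1 else 0)
        - (if n = 2 ∧ m = 0 then 1 else 0) + (if n = 3 ∧ m = 0 then 1 else 0)
        + (if n = 1 ∧ m = 1 then 1 else 0) - (if n = 3 ∧ m = 1 then 1 else 0) := by
  match m with
  | 0 => rcases n with _ | _ | _ | _ | n <;> simp [arndtParts_zero]
  | 1 => rcases n with _ | _ | _ | _ | n <;> simp [arndtParts_one]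
  | m + 2 =>
    rcases lt_or_ge n 3 with hn | hn
    · interval_cases n <;> simp [arndtParts_add_two_of_lt_three]
    · obtain ⟨n, rfl⟩ := Nat.exists_eq_add_of_le' hn
      have := arndtParts_add_three_add_two n m
      simp
      omega

open MvPowerSeries in
theorem coeff_arndtGF (d : Fin 2 →₀ ℕ) :
    coeff d arndtGF = (arndtParts (d 0) (d 1) : ℤ) :=
  rfl

/-- `(1 - x - x² + x³ - x³y²) · A(x,y) = 1 - x - x² + x³ + xy - x³y`. -/
theorem arndtGF_eq :
    (1 - MvPowerSeries.X 0 - MvPowerSeries.X 0 ^ 2 + MvPowerSeries.X 0 ^ 3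
        - MvPowerSeries.X 0 ^ 3 * MvPowerSeries.X 1 ^ 2) * arndtGF
      = 1 - MvPowerSeries.X 0 - MvPowerSeries.X 0 ^ 2 + MvPowerSeries.X 0 ^ 3
        + MvPowerSeries.X 0 * MvPowerSeries.X 1
        - MvPowerSeries.X 0 ^ 3 * MvPowerSeries.X 1 := by
  ext d
  simp only [MvPowerSeries.X_pow_eq]
  simp only [sub_mul, add_mul, one_mul, MvPowerSeries.X_def, MvPowerSeries.monomial_mul_monomial,
    map_sub, map_add, MvPowerSeries.coeff_monomial_mul, MvPowerSeries.coeff_monomial,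
    MvPowerSeries.coeff_one, coeff_arndtGF, Finsupp.le_def, Finsupp.ext_iff, Fin.forall_fin_two,
    Finsupp.tsub_apply, Finsupp.add_apply, Finsupp.single_apply, Finsupp.coe_zero, Pi.zero_apply]
  norm_num
  exact arndtParts_sub_shifts (d 0) (d 1)
end

section
/- For every integer n ≥ 1, F_n = Σ_{m=0}^{n} Σ_{ℓ=0}^{⌊(n − m − ⌊m/2⌋)/2⌋} C(⌊m/2⌋ + ℓ − 1, ℓ) · C(n − 2⌊m/2⌋ − 2ℓ − 1, ⌊(m−1)/2⌋), where the inner sum is empty when n − m − ⌊m/2⌋ < 0, and C(a, b) denotes the generalized binomial coefficient a(a−1)⋯(a−b+1)/b! for an integer a (possibly negative) and a natural number b. -/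
/-!
The `m`-th summand is the coefficient of `X ^ n` in
`X ^ (m + ⌊m/2⌋) / ((1 - X²) ^ ⌊m/2⌋ (1 - X) ^ (⌊(m-1)/2⌋ + 1))`. Grouping `m = 2k + 1` with
`m = 2k + 2` gives `(X / (1 - X) + y) y ^ k` with `y = X³ / ((1 - X) (1 - X²))`, a geometric series
in `y`. Since `(1 - X - X²) (X / (1 - X) + y) = X (1 - y)`, the whole sum is `X / (1 - X - X²)`,
the generating function of the Fibonacci numbers; the terms with `m > n` do not reach `X ^ n`.
-/

open Finset hiding mk

theorem Finset.sum_range_two_mul {M : Type*} [AddCommMonoid M] (f : ℕ → M) (K : ℕ) :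
    ∑ m ∈ range (2 * K), f m = ∑ k ∈ range K, (f (2 * k) + f (2 * k + 1)) := by
  induction K with
  | zero => simp
  | succ K ih => rw [mul_add_one, sum_range_succ, sum_range_succ, sum_range_succ, ih, add_assoc]

theorem Finset.sum_range_succ_ite_dvd {M : Type*} [AddCommMonoid M] {p : ℕ} (hp : p ≠ 0)
    (N : ℕ) (f : ℕ → M) :
    ∑ a ∈ range (N + 1), (if p ∣ a then f a else 0) = ∑ ℓ ∈ range (N / p + 1), f (p * ℓ) := by
  rw [← sum_filter]
  refine sum_nbij' (· / p) (p * ·) ?_ ?_ ?_ ?_ ?_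
  · intro a ha
    simp only [mem_filter, mem_range] at ha ⊢
    exact Nat.lt_succ_of_le (Nat.div_le_div_right (Nat.lt_succ_iff.1 ha.1))
  · intro ℓ hℓ
    simp only [mem_filter, mem_range] at hℓ ⊢
    refine ⟨Nat.lt_succ_of_le ?_, dvd_mul_right p ℓ⟩
    rw [mul_comm]
    exact Nat.mul_le_of_le_div p ℓ N (Nat.lt_succ_iff.1 hℓ)
  · intro a ha
    exact Nat.mul_div_cancel' (mem_filter.1 ha).2
  · intro ℓ _
    exact Nat.mul_div_cancel_left ℓ (Nat.pos_of_ne_zero hp)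
  · intro a ha
    rw [Nat.mul_div_cancel' (mem_filter.1 ha).2]

namespace PowerSeries

theorem one_sub_X_sub_X_sq_mul_mk_fib {R : Type*} [Ring R] :
    (1 - X - X ^ 2 : R⟦X⟧) * mk (fun n => (Nat.fib n : R)) = X := by
  ext n
  rcases n with _ | _ | n
  · simp
  · simp [sub_mul, coeff_X, coeff_X_pow_mul']
  · simp [sub_mul, coeff_X, pow_two, mul_assoc, Nat.fib_add_two]

variable {R : Type*} [CommRing R]

theorem coeff_expand_mul_eq_sum {p : ℕ} (hp : p ≠ 0) (φ ψ : R⟦X⟧) (N : ℕ) :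
    coeff N (expand p hp φ * ψ) =
      ∑ ℓ ∈ range (N / p + 1), coeff ℓ φ * coeff (N - p * ℓ) ψ := by
  rw [coeff_mul, Nat.sum_antidiagonal_eq_sum_range_succ
    (fun a b => coeff a (expand p hp φ) * coeff b ψ)]
  simp only [coeff_expand, ite_mul, zero_mul]
  rw [sum_range_succ_ite_dvd hp]
  refine sum_congr rfl fun ℓ _ => ?_
  rw [Nat.mul_div_cancel_left _ (Nat.pos_of_ne_zero hp)]

theorem coeff_mk_one_pow (k ℓ : ℕ) : coeff ℓ ((mk 1 : R⟦X⟧) ^ k) = (k + ℓ - 1).choose ℓ := by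
  cases k with
  | zero => cases ℓ <;> simp [coeff_one]
  | succ d =>
    rw [mk_one_pow_eq_mk_choose_add, coeff_mk, Nat.add_right_comm, Nat.add_sub_cancel,
      Nat.choose_symm_add]

end PowerSeries

theorem genChoose_natCast (a b : ℕ) : genChoose a b = a.choose b := by
  rw [genChoose, if_pos (Int.natCast_nonneg b), Int.toNat_natCast]
  have hprod : ∏ i ∈ range b, ((a : ℤ) - i) = a.descFactorial b := by
    rcases le_or_gt b a with h | h
    · rw [Nat.descFactorial_eq_prod_range, Nat.cast_prod]
      refine prod_congr rfl fun i hi => ?_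
      rw [Nat.cast_sub (by rw [mem_range] at hi; omega)]
    · rw [prod_eq_zero (mem_range.2 h) (sub_self _), Nat.descFactorial_eq_zero_iff_lt.2 h,
        Nat.cast_zero]
  rw [hprod, Nat.choose_eq_descFactorial_div_factorial, Int.natCast_div]

theorem genChoose_of_neg (a : ℤ) {b : ℤ} (hb : b < 0) : genChoose a b = 0 :=
  if_neg hb.not_ge

theorem genChoose_add_sub_one (k ℓ : ℕ) :
    genChoose ((k : ℤ) + ℓ - 1) ℓ = (k + ℓ - 1).choose ℓ := by
  rcases Nat.eq_zero_or_pos (k + ℓ) with h | h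
  · obtain ⟨rfl, rfl⟩ : k = 0 ∧ ℓ = 0 := by omega
    simp [genChoose]
  · rw [show (k : ℤ) + ℓ - 1 = (k + ℓ - 1 : ℕ) by omega, genChoose_natCast]

section FibonacciSeries

open PowerSeries

/-- `X ^ (m + ⌊m/2⌋) / ((1 - X²) ^ ⌊m/2⌋ (1 - X) ^ (⌊(m-1)/2⌋ + 1))`, with `(1 - X)⁻¹ = mk 1`
and `expand 2` substituting `X²` for `X`. -/
noncomputable def fibTerm (m : ℕ) : ℤ⟦X⟧ :=
  X ^ (m + m / 2) * (expand 2 two_ne_zero (mk 1 ^ (m / 2)) * mk 1 ^ ((m - 1) / 2 + 1))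

/-- `X³ / ((1 - X²) (1 - X))`. -/
noncomputable def fibRatio : ℤ⟦X⟧ :=
  X ^ 3 * (expand 2 two_ne_zero (mk 1) * mk 1)

theorem coeff_fibTerm (n m : ℕ) (hm : 1 ≤ m) :
    coeff n (fibTerm m) =
      if n < m + m / 2 then 0
      else
        ∑ ℓ ∈ range ((n - m - m / 2) / 2 + 1),
          genChoose (((m / 2 : ℕ) : ℤ) + (ℓ : ℤ) - 1) (ℓ : ℤ) *
            genChoose ((n : ℤ) - 2 * ((m / 2 : ℕ) : ℤ) - 2 * (ℓ : ℤ) - 1) (((m : ℤ) - 1) / 2) := by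
  rw [fibTerm, coeff_X_pow_mul']
  by_cases h : n < m + m / 2
  · rw [if_pos h, if_neg (by omega)]
  rw [if_neg h, if_pos (by omega), coeff_expand_mul_eq_sum, Nat.sub_sub]
  refine sum_congr rfl fun ℓ hℓ => ?_
  rw [mem_range] at hℓ
  rw [coeff_mk_one_pow, mk_one_pow_eq_mk_choose_add, coeff_mk, genChoose_add_sub_one,
    show ((m : ℤ) - 1) / 2 = ((m - 1) / 2 : ℕ) by omega,
    show (n : ℤ) - 2 * ((m / 2 : ℕ) : ℤ) - 2 * ℓ - 1 = ((m - 1) / 2 + (n - (m + m / 2) - 2 * ℓ) : ℕ)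
      by omega,
    genChoose_natCast]

theorem fibTerm_add_fibTerm (k : ℕ) :
    fibTerm (2 * k + 1) + fibTerm (2 * k + 2) = (X * mk 1 + fibRatio) * fibRatio ^ k := by
  simp only [fibTerm, fibRatio, map_pow]
  rw [show (2 * k + 1) / 2 = k by omega, show (2 * k + 1 - 1) / 2 = k by omega,
    show (2 * k + 2) / 2 = k + 1 by omega, show (2 * k + 2 - 1) / 2 = k by omega]
  ring

theorem one_sub_X_sub_X_sq_mul_X_mul_mk_one_add_fibRatio :
    (1 - X - X ^ 2) * (X * mk 1 + fibRatio) = X * (1 - fibRatio) := by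
  have hG : (1 - X) * mk 1 = (1 : ℤ⟦X⟧) := by rw [mul_comm, mk_one_mul_one_sub_eq_one]
  have hU : (1 - X ^ 2) * expand 2 two_ne_zero (mk 1) = (1 : ℤ⟦X⟧) := by
    simpa using congrArg (expand 2 two_ne_zero) hG
  rw [fibRatio]
  linear_combination X * hG + X ^ 3 * mk 1 * hU

theorem sum_range_fibTerm (K : ℕ) :
    ∑ m ∈ range (2 * K), fibTerm (m + 1) = mk (fun n => (Nat.fib n : ℤ)) * (1 - fibRatio ^ K) := by
  have hunit : IsUnit (1 - X - X ^ 2 : ℤ⟦X⟧) := by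
    rw [isUnit_iff_constantCoeff]
    simp
  refine hunit.mul_left_cancel ?_
  rw [sum_range_two_mul, sum_congr rfl fun k _ => fibTerm_add_fibTerm k, ← mul_sum, ← mul_assoc,
    one_sub_X_sub_X_sq_mul_X_mul_mk_one_add_fibRatio, mul_assoc, mul_neg_geom_sum, ← mul_assoc,
    one_sub_X_sub_X_sq_mul_mk_fib]

theorem coeff_mk_fib_mul_one_sub_fibRatio_pow {n K : ℕ} (h : n < 3 * K) :
    coeff n (mk (fun n => (Nat.fib n : ℤ)) * (1 - fibRatio ^ K)) = (Nat.fib n : ℤ) := by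
  rw [fibRatio, mul_pow, ← pow_mul, mul_sub, mul_one, mul_left_comm, map_sub, coeff_X_pow_mul',
    if_neg (by omega), sub_zero, coeff_mk]

end FibonacciSeries

theorem fib_double_sum'_general (n : ℕ) :
    (Nat.fib n : ℤ) =
      ∑ m ∈ Finset.range (n + 1),
        if n < m + m / 2 then 0
        else
          ∑ ℓ ∈ Finset.range ((n - m - m / 2) / 2 + 1),
            genChoose (((m / 2 : ℕ) : ℤ) + (ℓ : ℤ) - 1) (ℓ : ℤ) *
              genChoose ((n : ℤ) - 2 * ((m / 2 : ℕ) : ℤ) - 2 * (ℓ : ℤ) - 1)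
                (((m : ℤ) - 1) / 2) := by
  -- the `m = 0` summand vanishes because `(0 - 1) / 2 = -1` in `ℤ`
  rw [sum_range_succ', if_neg (by omega),
    sum_eq_zero (s := range ((n - 0 - 0 / 2) / 2 + 1)) fun ℓ _ =>
      mul_eq_zero_of_right _ (genChoose_of_neg _ (by omega)), add_zero,
    ← coeff_mk_fib_mul_one_sub_fibRatio_pow (K := n + 1) (by omega), ← sum_range_fibTerm, map_sum]
  refine (sum_subset (range_subset_range.2 (by omega)) fun m _ hm => ?_).symm.trans
    (sum_congr rfl fun m _ => coeff_fibTerm n (m + 1) (by omega))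
  rw [coeff_fibTerm n (m + 1) (by omega), if_pos (by rw [mem_range] at hm; omega)]

/-- for `n ≥ 1`,
`F_n = Σ_{m=0}^{n} Σ_{ℓ=0}^{⌊(n-m-⌊m/2⌋)/2⌋} C(⌊m/2⌋+ℓ-1, ℓ) C(n-2⌊m/2⌋-2ℓ-1, ⌊(m-1)/2⌋)`,
the inner sum being empty when `n - m - ⌊m/2⌋ < 0`. -/
theorem fib_double_sum' (n : ℕ) (hn : 1 ≤ n) :
    (Nat.fib n : ℤ) =
      ∑ m ∈ Finset.range (n + 1),
        if n < m + m / 2 then 0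
        else
          ∑ ℓ ∈ Finset.range ((n - m - m / 2) / 2 + 1),
            genChoose (((m / 2 : ℕ) : ℤ) + (ℓ : ℤ) - 1) (ℓ : ℤ) *
              genChoose ((n : ℤ) - 2 * ((m / 2 : ℕ) : ℤ) - 2 * (ℓ : ℤ) - 1)
                (((m : ℤ) - 1) / 2) :=
  fib_double_sum'_general n
end

section
/- For each fixed integer m ≥ 1, b(n,m) ~ (φ^{n−m−2}/√5)(1 + φ^{1−m}) as n → ∞, where φ = (1+√5)/2; that is, the real sequence b(n,m) · √5 / φ^{n−m−2} tends to 1 + φ^{1−m} as n → ∞. -/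
/-- `arndtLast n m` is the number of Arndt compositions of `n` whose last part equals `m`
(the last part of the empty composition is taken to be `0`). -/
noncomputable def arndtLast (n m : ℕ) : ℕ :=
  Set.ncard {l : List ℕ | IsComposition n l ∧ IsArndt l ∧ l.getLastD 0 = m}

/-!
Write `e t` and `o t` for the numbers of even- and odd-length Arndt compositions of `t`.
Deleting the last part `m` turns an odd-length Arndt composition of `n` into an arbitrary
even-length one of `n - m`, and an even-length one into an odd-length one of `n - m` with last
part `> m`; lowering that last part by `m` gives `b(n, m) = e(n - m) + o(n - 2m)`. Lowering the
last part by one, or the last two parts of an even-length composition by one each, gives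
`o (t + 1) = e t + o t` and `e (t + 2) = o t + e t`, so `e (t + 2) = F t` and
`o (t + 2) = F (t + 1)`. Hence `b(n, m) = F (n - m - 2) + F (n - 2m - 1)` for `n ≥ 2m + 2`, and
Binet's formula gives the limit.
-/

open Real Filter

theorem isComposition_zero_iff {l : List ℕ} : IsComposition 0 l ↔ l = [] := by
  refine ⟨fun ⟨hpos, hsum⟩ => ?_, fun h => by simp [h, IsComposition]⟩
  rw [List.sum_eq_zero_iff] at hsum
  exact List.eq_nil_iff_forall_not_mem.2 fun x hx => (hpos x hx).ne' (hsum x hx)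

theorem isComposition_append_singleton {t x : ℕ} {l : List ℕ} :
    IsComposition t (l ++ [x]) ↔ IsComposition (t - x) l ∧ 0 < x ∧ x ≤ t := by
  simp only [IsComposition, List.mem_append, List.mem_singleton, or_imp, forall_and,
    forall_eq, List.sum_append, List.sum_singleton]
  exact ⟨fun ⟨⟨h, hx⟩, hs⟩ => ⟨⟨h, by omega⟩, hx, by omega⟩,
    fun ⟨⟨h, hs⟩, hx, _⟩ => ⟨⟨h, hx⟩, by omega⟩⟩

theorem IsComposition.getLastD_pos {t : ℕ} {L : List ℕ} (h : IsComposition t L) (hne : L ≠ []) :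
    0 < L.getLastD 0 := by
  obtain rfl | ⟨l, x, rfl⟩ := L.eq_nil_or_concat'
  · exact absurd rfl hne
  · simpa using (isComposition_append_singleton.1 h).2.1

theorem finite_setOf_isComposition_s16 (t : ℕ) : {l | IsComposition t l}.Finite :=
  (Set.finite_range fun c : Composition t => c.blocks).subset fun l hl =>
    ⟨⟨l, hl.1 _, hl.2⟩, rfl⟩

theorem isArndt_nil : IsArndt [] := by simp [IsArndt]

theorem List.getLastD_eq_getD {α : Type*} (l : List α) (d : α) :
    l.getLastD d = l.getD (l.length - 1) d := by
  simp [List.getLast?_eq_getElem?, List.getD_eq_getElem?_getD]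

theorem isArndt_append_singleton {l : List ℕ} {x : ℕ} :
    IsArndt (l ++ [x]) ↔ IsArndt l ∧ (Odd l.length → x < l.getLastD 0) := by
  have getD_left {i : ℕ} (hi : i < l.length) : (l ++ [x]).getD i 0 = l.getD i 0 :=
    List.getD_append _ _ _ _ hi
  simp only [IsArndt, List.length_append, List.length_singleton, List.getLastD_eq_getD]
  constructor
  · intro h
    refine ⟨fun i hi => ?_, fun ⟨k, hk⟩ => ?_⟩
    · simpa only [getD_left hi, getD_left (by omega : 2 * i < l.length)] using h i (by omega)
    · have := h k (by omega)
      rw [show 2 * k + 1 = l.length by omega, List.getD_append_right _ _ _ _ le_rfl,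
        getD_left (by omega), show 2 * k = l.length - 1 by omega] at this
      simpa using this
  · rintro ⟨h, hodd⟩ i hi
    rcases (by omega : 2 * i + 1 < l.length ∨ 2 * i + 1 = l.length) with hi | hi
    · rw [getD_left hi, getD_left (by omega)]
      exact h i hi
    · rw [hi, List.getD_append_right _ _ _ _ le_rfl, getD_left (by omega),
        show 2 * i = l.length - 1 by omega]
      simpa using hodd ⟨i, by omega⟩

def oddArndt (t : ℕ) : Set (List ℕ) := {l | IsComposition t l ∧ IsArndt l ∧ Odd l.length}

def evenArndt (t : ℕ) : Set (List ℕ) := {l | IsComposition t l ∧ IsArndt l ∧ Even l.length}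

theorem finite_oddArndt (t : ℕ) : (oddArndt t).Finite :=
  (finite_setOf_isComposition_s16 t).subset fun _ h => h.1

theorem finite_evenArndt (t : ℕ) : (evenArndt t).Finite :=
  (finite_setOf_isComposition_s16 t).subset fun _ h => h.1

theorem nil_notMem_oddArndt (t : ℕ) : [] ∉ oddArndt t := fun h => by simpa using h.2.2

theorem nil_mem_evenArndt_iff {t : ℕ} : [] ∈ evenArndt t ↔ t = 0 := by
  simp [evenArndt, IsComposition, isArndt_nil, eq_comm]

theorem mem_oddArndt_append_singleton {t x : ℕ} {l : List ℕ} :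
    l ++ [x] ∈ oddArndt t ↔ l ∈ evenArndt (t - x) ∧ 0 < x ∧ x ≤ t := by
  simp only [oddArndt, evenArndt, Set.mem_ofPred_eq, isComposition_append_singleton,
    isArndt_append_singleton, List.length_append, List.length_singleton, Nat.odd_add_one,
    Nat.not_odd_iff_even]
  constructor
  · rintro ⟨⟨hc, hx⟩, ⟨ha, -⟩, heven⟩
    exact ⟨⟨hc, ha, heven⟩, hx⟩
  · rintro ⟨⟨hc, ha, heven⟩, hx⟩
    exact ⟨⟨hc, hx⟩, ⟨ha, fun hodd => absurd hodd (Nat.not_odd_iff_even.2 heven)⟩,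
      heven⟩

theorem mem_evenArndt_append_singleton {t x : ℕ} {l : List ℕ} :
    l ++ [x] ∈ evenArndt t ↔
      l ∈ oddArndt (t - x) ∧ 0 < x ∧ x < l.getLastD 0 ∧ x ≤ t := by
  simp only [oddArndt, evenArndt, Set.mem_ofPred_eq, isComposition_append_singleton,
    isArndt_append_singleton, List.length_append, List.length_singleton, Nat.even_add_one,
    Nat.not_even_iff_odd]
  constructor
  · rintro ⟨⟨hc, hx, hxt⟩, ⟨ha, hlt⟩, hodd⟩
    exact ⟨⟨hc, ha, hodd⟩, hx, hlt hodd, hxt⟩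
  · rintro ⟨⟨hc, ha, hodd⟩, hx, hlt, hxt⟩
    exact ⟨⟨hc, hx, hxt⟩, ⟨ha, fun _ => hlt⟩, hodd⟩

theorem mem_evenArndt_append_pair {t a b : ℕ} {l : List ℕ} :
    l ++ [a, b] ∈ evenArndt t ↔
      l ∈ evenArndt (t - (a + b)) ∧ 0 < b ∧ b < a ∧ a + b ≤ t := by
  rw [← List.singleton_append, ← List.append_assoc, mem_evenArndt_append_singleton,
    mem_oddArndt_append_singleton, List.getLastD_concat, Nat.sub_sub, Nat.add_comm b a]
  constructor
  · rintro ⟨⟨hl, ha, hab⟩, hb, hba, -⟩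
    exact ⟨hl, hb, hba, by omega⟩
  · rintro ⟨hl, hb, hba, habt⟩
    exact ⟨⟨hl, by omega, by omega⟩, hb, hba, by omega⟩

theorem exists_eq_append_pair_of_mem_evenArndt {t : ℕ} {L : List ℕ} (ht : 0 < t)
    (hL : L ∈ evenArndt t) : ∃ l a b, L = l ++ [a, b] := by
  obtain rfl | ⟨P, b, rfl⟩ := L.eq_nil_or_concat'
  · exact absurd (nil_mem_evenArndt_iff.1 hL) ht.ne'
  obtain rfl | ⟨l, a, rfl⟩ := P.eq_nil_or_concat'
  · exact absurd (mem_evenArndt_append_singleton.1 hL).1 (nil_notMem_oddArndt _)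
  · exact ⟨l, a, b, by simp⟩

theorem oddArndt_zero : oddArndt 0 = ∅ :=
  Set.eq_empty_of_forall_notMem fun L hL => by
    rw [isComposition_zero_iff.1 hL.1] at hL
    exact nil_notMem_oddArndt 0 hL

theorem evenArndt_zero : evenArndt 0 = {[]} := by
  ext L
  constructor
  · exact fun hL => isComposition_zero_iff.1 hL.1
  · rintro rfl
    exact nil_mem_evenArndt_iff.2 rfl

theorem evenArndt_eq_empty {t : ℕ} (h0 : 0 < t) (h3 : t < 3) : evenArndt t = ∅ := by
  refine Set.eq_empty_of_forall_notMem fun L hL => ?_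
  obtain ⟨l, a, b, rfl⟩ := exists_eq_append_pair_of_mem_evenArndt h0 hL
  obtain ⟨-, hb, hba, habt⟩ := mem_evenArndt_append_pair.1 hL
  omega

theorem ncard_oddArndt_getLastD_eq {n m : ℕ} (hm : 0 < m) (hmn : m ≤ n) :
    {L ∈ oddArndt n | L.getLastD 0 = m}.ncard = (evenArndt (n - m)).ncard := by
  refine (Set.InvOn.bijOn (f := List.dropLast) (f' := (· ++ [m])) ⟨?_, ?_⟩ ?_ ?_).ncard_eq
  · rintro L ⟨hL, rfl⟩
    obtain rfl | ⟨l, x, rfl⟩ := L.eq_nil_or_concat'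
    · exact absurd hL (nil_notMem_oddArndt n)
    · simp
  · intro l _
    simp
  · rintro L ⟨hL, rfl⟩
    obtain rfl | ⟨l, x, rfl⟩ := L.eq_nil_or_concat'
    · exact absurd hL (nil_notMem_oddArndt n)
    · simpa using (mem_oddArndt_append_singleton.1 hL).1
  · intro l hl
    exact ⟨mem_oddArndt_append_singleton.2 ⟨hl, hm, hmn⟩, List.getLastD_concat⟩

theorem ncard_evenArndt_getLastD_eq {n m : ℕ} (hm : 0 < m) (hmn : m ≤ n) :
    {L ∈ evenArndt n | L.getLastD 0 = m}.ncard =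
      {l ∈ oddArndt (n - m) | m < l.getLastD 0}.ncard := by
  refine (Set.InvOn.bijOn (f := List.dropLast) (f' := (· ++ [m])) ⟨?_, ?_⟩ ?_ ?_).ncard_eq
  · rintro L ⟨hL, rfl⟩
    obtain rfl | ⟨l, x, rfl⟩ := L.eq_nil_or_concat'
    · simp at hm
    · simp
  · intro l _
    simp
  · rintro L ⟨hL, rfl⟩
    obtain rfl | ⟨l, x, rfl⟩ := L.eq_nil_or_concat'
    · simp at hm
    · obtain ⟨hl, -, hlt, -⟩ := mem_evenArndt_append_singleton.1 hL
      simp only [List.dropLast_concat, List.getLastD_concat]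
      exact ⟨hl, hlt⟩
  · rintro l ⟨hl, hlt⟩
    exact ⟨mem_evenArndt_append_singleton.2 ⟨hl, hm, hlt, hmn⟩, List.getLastD_concat⟩

theorem ncard_oddArndt_lt_getLastD {s c : ℕ} (hcs : c ≤ s) :
    {L ∈ oddArndt s | c < L.getLastD 0}.ncard = (oddArndt (s - c)).ncard := by
  refine (Set.InvOn.bijOn (f := List.modifyLast (· - c)) (f' := List.modifyLast (· + c))
    ⟨?_, ?_⟩ ?_ ?_).ncard_eq
  · rintro L ⟨hL, hlt⟩
    obtain rfl | ⟨l, x, rfl⟩ := L.eq_nil_or_concat'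
    · exact absurd hL (nil_notMem_oddArndt s)
    · simp only [List.getLastD_concat] at hlt
      simp only [List.modifyLast_concat]
      congr 2
      omega
  · rintro L hL
    obtain rfl | ⟨l, x, rfl⟩ := L.eq_nil_or_concat'
    · exact absurd hL (nil_notMem_oddArndt _)
    · simp [List.modifyLast_concat]
  · rintro L ⟨hL, hlt⟩
    obtain rfl | ⟨l, x, rfl⟩ := L.eq_nil_or_concat'
    · exact absurd hL (nil_notMem_oddArndt s)
    · obtain ⟨hl, -, hxs⟩ := mem_oddArndt_append_singleton.1 hL
      simp only [List.getLastD_concat] at hlt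
      rw [List.modifyLast_concat, mem_oddArndt_append_singleton,
        show s - c - (x - c) = s - x by omega]
      exact ⟨hl, by omega, by omega⟩
  · rintro L hL
    obtain rfl | ⟨l, x, rfl⟩ := L.eq_nil_or_concat'
    · exact absurd hL (nil_notMem_oddArndt _)
    · obtain ⟨hl, hx, hxs⟩ := mem_oddArndt_append_singleton.1 hL
      rw [List.modifyLast_concat]
      refine ⟨mem_oddArndt_append_singleton.2 ⟨?_, by omega, by omega⟩, ?_⟩
      · rwa [show s - (x + c) = s - c - x by omega]
      · rw [List.getLastD_concat]
        omega

theorem List.getLastD_append_pair {α : Type*} (l : List α) (a b d : α) :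
    (l ++ [a, b]).getLastD d = b := by
  simp

def modifyLastTwo (f : ℕ → ℕ) (L : List ℕ) : List ℕ :=
  L.dropLast.modifyLast f ++ [f (L.getLastD 0)]

theorem modifyLastTwo_append_pair (f : ℕ → ℕ) (l : List ℕ) (a b : ℕ) :
    modifyLastTwo f (l ++ [a, b]) = l ++ [f a, f b] := by
  rw [modifyLastTwo, ← List.singleton_append, ← List.append_assoc, List.dropLast_concat,
    List.getLastD_concat, List.modifyLast_concat]
  simp

theorem ncard_evenArndt_one_lt_getLastD {t : ℕ} (ht : 0 < t) :
    {L ∈ evenArndt (t + 2) | 1 < L.getLastD 0}.ncard = (evenArndt t).ncard := by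
  refine (Set.InvOn.bijOn (f := modifyLastTwo (· - 1)) (f' := modifyLastTwo (· + 1))
    ⟨?_, ?_⟩ ?_ ?_).ncard_eq
  · rintro L ⟨hL, hlt⟩
    obtain ⟨l, a, b, rfl⟩ := exists_eq_append_pair_of_mem_evenArndt (by omega) hL
    obtain ⟨-, -, hba, -⟩ := mem_evenArndt_append_pair.1 hL
    rw [List.getLastD_append_pair] at hlt
    rw [modifyLastTwo_append_pair, modifyLastTwo_append_pair]
    congr 3 <;> omega
  · rintro L hL
    obtain ⟨l, a, b, rfl⟩ := exists_eq_append_pair_of_mem_evenArndt ht hL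
    simp [modifyLastTwo_append_pair]
  · rintro L ⟨hL, hlt⟩
    obtain ⟨l, a, b, rfl⟩ := exists_eq_append_pair_of_mem_evenArndt (by omega) hL
    obtain ⟨hl, -, hba, habt⟩ := mem_evenArndt_append_pair.1 hL
    rw [List.getLastD_append_pair] at hlt
    rw [modifyLastTwo_append_pair, mem_evenArndt_append_pair,
      show t - (a - 1 + (b - 1)) = t + 2 - (a + b) by omega]
    exact ⟨hl, by omega, by omega, by omega⟩
  · rintro L hL
    obtain ⟨l, a, b, rfl⟩ := exists_eq_append_pair_of_mem_evenArndt ht hL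
    obtain ⟨hl, hb, hba, habt⟩ := mem_evenArndt_append_pair.1 hL
    rw [modifyLastTwo_append_pair]
    refine ⟨mem_evenArndt_append_pair.2 ⟨?_, by omega, by omega, by omega⟩, ?_⟩
    · rwa [show t + 2 - (a + 1 + (b + 1)) = t - (a + b) by omega]
    · rw [List.getLastD_append_pair]
      omega

theorem ncard_eq_getLastD_eq_one_add {s : Set (List ℕ)} (hs : s.Finite)
    (hpos : ∀ L ∈ s, 0 < L.getLastD 0) :
    s.ncard = {L ∈ s | L.getLastD 0 = 1}.ncard + {L ∈ s | 1 < L.getLastD 0}.ncard := by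
  rw [← Set.ncard_inter_add_ncard_sdiff_eq_ncard s {L | L.getLastD 0 = 1} hs]
  congr 2
  ext L
  simp only [Set.mem_sdiff, Set.mem_ofPred_eq, and_congr_right_iff]
  exact fun hL => ⟨fun h => by have := hpos L hL; omega, fun h => by omega⟩

theorem ncard_oddArndt_succ (t : ℕ) :
    (oddArndt (t + 1)).ncard = (evenArndt t).ncard + (oddArndt t).ncard := by
  rw [ncard_eq_getLastD_eq_one_add (finite_oddArndt _) fun L hL =>
      hL.1.getLastD_pos (ne_of_mem_of_not_mem hL (nil_notMem_oddArndt _)),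
    ncard_oddArndt_getLastD_eq one_pos (by omega), ncard_oddArndt_lt_getLastD (by omega)]
  simp

theorem ncard_evenArndt_add_two {t : ℕ} (ht : 0 < t) :
    (evenArndt (t + 2)).ncard = (oddArndt t).ncard + (evenArndt t).ncard := by
  rw [ncard_eq_getLastD_eq_one_add (finite_evenArndt _) fun L hL =>
      hL.1.getLastD_pos (by rintro rfl; simp [nil_mem_evenArndt_iff] at hL),
    ncard_evenArndt_getLastD_eq one_pos (by omega), ncard_oddArndt_lt_getLastD (by omega),
    ncard_evenArndt_one_lt_getLastD ht]
  simp

theorem ncard_evenArndt_oddArndt_add_two (t : ℕ) :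
    (evenArndt (t + 2)).ncard = Nat.fib t ∧ (oddArndt (t + 2)).ncard = Nat.fib (t + 1) := by
  have he1 : (evenArndt 1).ncard = 0 := by simp [evenArndt_eq_empty]
  have he2 : (evenArndt 2).ncard = 0 := by simp [evenArndt_eq_empty]
  have ho1 : (oddArndt 1).ncard = 1 := by
    simp [ncard_oddArndt_succ 0, evenArndt_zero, oddArndt_zero]
  have ho2 : (oddArndt 2).ncard = 1 := by rw [ncard_oddArndt_succ 1, he1, ho1]
  induction t using Nat.twoStepInduction with
  | zero => simp [he2, ho2]
  | one =>
    rw [ncard_evenArndt_add_two one_pos, ncard_oddArndt_succ 2, he1, he2, ho1, ho2]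
    simp
  | more t ih₀ ih₁ =>
    rw [ncard_evenArndt_add_two (by omega), ncard_oddArndt_succ (t + 3), ih₀.1, ih₀.2, ih₁.1,
      ih₁.2]
    exact ⟨(Nat.fib_add_two.trans (add_comm _ _)).symm, Nat.fib_add_two.symm⟩

theorem arndtLast_eq_add (n m : ℕ) :
    arndtLast n m = {L ∈ oddArndt n | L.getLastD 0 = m}.ncard +
      {L ∈ evenArndt n | L.getLastD 0 = m}.ncard := by
  rw [arndtLast, ← Set.ncard_inter_add_ncard_sdiff_eq_ncard _ {L | Odd L.length}
    ((finite_setOf_isComposition_s16 n).subset fun _ h => h.1)]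
  congr 2 <;> ext L <;> simp [oddArndt, evenArndt] <;> tauto

theorem arndtLast_eq_fib_add_fib {n m : ℕ} (hm : 0 < m) (hn : 2 * m + 2 ≤ n) :
    arndtLast n m = Nat.fib (n - m - 2) + Nat.fib (n - 2 * m - 1) := by
  have heven := (ncard_evenArndt_oddArndt_add_two (n - m - 2)).1
  have hodd := (ncard_evenArndt_oddArndt_add_two (n - 2 * m - 2)).2
  rw [show n - m - 2 + 2 = n - m by omega] at heven
  rw [show n - 2 * m - 2 + 2 = n - m - m by omega, show n - 2 * m - 2 + 1 = n - 2 * m - 1 by omega]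
    at hodd
  rw [arndtLast_eq_add, ncard_oddArndt_getLastD_eq hm (by omega),
    ncard_evenArndt_getLastD_eq hm (by omega), ncard_oddArndt_lt_getLastD (by omega), heven, hodd]

theorem tendsto_fib_mul_sqrt_five_div_goldenRatio_pow :
    Tendsto (fun k => (Nat.fib k : ℝ) * √5 / goldenRatio ^ k) atTop (nhds 1) := by
  have hratio : |goldenConj / goldenRatio| < 1 := by
    rw [abs_div, div_lt_one (by positivity), abs_of_pos goldenRatio_pos, abs_lt]
    constructor <;> linarith [neg_one_lt_goldenConj, goldenConj_neg, one_lt_goldenRatio]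
  have binet (k : ℕ) :
      (Nat.fib k : ℝ) * √5 / goldenRatio ^ k = 1 - (goldenConj / goldenRatio) ^ k := by
    rw [coe_fib_eq, div_mul_cancel₀ _ (by positivity), sub_div, div_self (by positivity),
      ← div_pow]
  simpa [binet] using (tendsto_pow_atTop_nhds_zero_of_abs_lt_one hratio).const_sub 1

/-- for fixed `m ≥ 1`, `b(n,m) ~ (φ^{n-m-2}/√5)(1 + φ^{1-m})` as `n → ∞`,
where `φ = (1+√5)/2`. -/
theorem arndtLast_asymptotic (m : ℕ) (hm : 1 ≤ m) :
    Filter.Tendsto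
      (fun n : ℕ =>
        (arndtLast n m : ℝ) * Real.sqrt 5 /
          ((1 + Real.sqrt 5) / 2) ^ ((n : ℤ) - (m : ℤ) - 2))
      Filter.atTop (nhds (1 + ((1 + Real.sqrt 5) / 2) ^ (1 - (m : ℤ)))) := by
  set g : ℕ → ℝ := fun k => Nat.fib k * √5 / goldenRatio ^ k
  have hlim : Tendsto (fun n => g (n - m - 2) + g (n - 2 * m - 1) * goldenRatio ^ (1 - m : ℤ))
      atTop (nhds (1 + 1 * goldenRatio ^ (1 - m : ℤ))) :=
    (tendsto_fib_mul_sqrt_five_div_goldenRatio_pow.comp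
      ((tendsto_sub_atTop_nat 2).comp (tendsto_sub_atTop_nat m))).add
    ((tendsto_fib_mul_sqrt_five_div_goldenRatio_pow.comp
      ((tendsto_sub_atTop_nat 1).comp (tendsto_sub_atTop_nat (2 * m)))).mul_const _)
  rw [one_mul] at hlim
  refine hlim.congr' ?_
  filter_upwards [eventually_ge_atTop (2 * m + 2)] with n hn
  have hpow : goldenRatio ^ (n - 2 * m - 1) =
      goldenRatio ^ (n - m - 2) * goldenRatio ^ (1 - m : ℤ) := by
    rw [← zpow_natCast, ← zpow_natCast, ← zpow_add₀ goldenRatio_ne_zero]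
    congr 1
    omega
  rw [arndtLast_eq_fib_add_fib hm hn, show (n : ℤ) - m - 2 = (n - m - 2 : ℕ) by omega,
    zpow_natCast]
  simp only [g, hpow]
  field_simp
  push_cast
  ring
end
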